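/- A brick with dimensions (c_1,...,c_d) tiles the unit cube (0,1)^d by translations if and only if 1/c_j is a (positive) integer for every j = 1,...,d. -/

import Mathlib

/-!
If translates of the brick tile the cube, integrate the tiling identity against
`x ↦ sin (2π x_j / c_j)`. By Fubini, a translate of the brick contributes zero, since its `j`-th
side is a full period, while the cube contributes `c_j (1 - cos (2π / c_j)) / (2π)`. Hence
`cos (2π / c_j) = 1`, i.e. `1 / c_j` is an integer.

Conversely, if `1 / c_j = n_j`, the translates by `(k_j c_j)_j` with `0 ≤ k_j < n_j` tile the cube
at every point none of whose coordinates `x_j` lies in `c_j ℕ`.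
-/

open MeasureTheory Set Real

variable {ι : Type*} [Fintype ι]

theorem EuclideanSpace.integral_fintype_prod_eq_prod {𝕜 : Type*} [RCLike 𝕜]
    (f : ι → ℝ → 𝕜) :
    ∫ x : EuclideanSpace ℝ ι, ∏ i, f i (x i) = ∏ i, ∫ t, f i t :=
  ((PiLp.volume_preserving_ofLp ι).integral_comp
      (MeasurableEquiv.toLp 2 (ι → ℝ)).symm.measurableEmbedding
      (fun y => ∏ i, f i (y i))).trans
    (integral_fintype_prod_volume_eq_prod f)

theorem EuclideanSpace.integrable_fintype_prod {𝕜 : Type*} [RCLike 𝕜] {f : ι → ℝ → 𝕜}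
    (hf : ∀ i, Integrable (f i)) :
    Integrable fun x : EuclideanSpace ℝ ι => ∏ i, f i (x i) :=
  ((PiLp.volume_preserving_ofLp ι).integrable_comp_emb
      (MeasurableEquiv.toLp 2 (ι → ℝ)).symm.measurableEmbedding
      (g := fun y => ∏ i, f i (y i))).2
    (volume_pi (α := fun _ : ι => ℝ) ▸ Integrable.fintype_prod hf)

theorem EuclideanSpace.ae_forall_apply {p : ι → ℝ → Prop} (hp : ∀ i, ∀ᵐ t, p i t) :
    ∀ᵐ x : EuclideanSpace ℝ ι, ∀ i, p i (x i) :=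
  (PiLp.volume_preserving_ofLp ι).quasiMeasurePreserving.ae
    (ae_all_iff.2 fun i =>
      (volume_pi (α := fun _ : ι => ℝ) ▸ Measure.tendsto_eval_ae_ae).eventually (hp i))

theorem indicator_Ioo_sub_mul (a c t : ℝ) (g : ℝ → ℝ) :
    (Ioo 0 c).indicator 1 (t - a) * g t = (Ioo a (a + c)).indicator g t := by
  simp only [indicator_apply, mem_Ioo, sub_pos, sub_lt_iff_lt_add', Pi.one_apply, ite_mul,
    one_mul, zero_mul]

theorem indicator_Ioo_eq_indicator_Ioc {α M : Type*} [LinearOrder α] [Zero M] {a b t : α}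
    (f : α → M) (ht : t ≠ b) :
    (Ioo a b).indicator f t = (Ioc a b).indicator f t := by
  simp only [indicator_apply, mem_Ioo, mem_Ioc, le_iff_lt_or_eq, ht, or_false]

theorem sum_range_indicator_Ioc_sub_mul {c : ℝ} (hc : 0 ≤ c) (n : ℕ) (t : ℝ) :
    ∑ k ∈ Finset.range n, (Ioc 0 c).indicator (1 : ℝ → ℝ) (t - k * c) =
      (Ioc 0 (n * c)).indicator 1 t := by
  induction n with
  | zero => simp
  | succ n ih =>
    have hshift : (Ioc 0 c).indicator (1 : ℝ → ℝ) (t - n * c) =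
        (Ioc (n * c) ((n + 1) * c)).indicator 1 t := by
      simp only [indicator_apply, mem_Ioc, sub_pos, sub_le_iff_le_add', add_mul, one_mul,
        Pi.one_apply]
    have hdisj : Disjoint (Ioc 0 (n * c)) (Ioc (n * c) ((n + 1) * c)) :=
      Ioc_disjoint_Ioc_of_le le_rfl
    have hunion : Ioc 0 (n * c) ∪ Ioc (n * c) ((n + 1) * c) = Ioc 0 ((n + 1) * c) :=
      Ioc_union_Ioc_eq_Ioc (by positivity) (by nlinarith)
    rw [Finset.sum_range_succ, ih, hshift, Nat.cast_succ, ← hunion,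
      indicator_union_of_disjoint hdisj]

theorem ae_sum_range_indicator_Ioo_sub_mul {c : ℝ} (hc : 0 ≤ c) (n : ℕ) :
    ∀ᵐ t, ∑ k ∈ Finset.range n, (Ioo 0 c).indicator (1 : ℝ → ℝ) (t - k * c) =
      (Ioo 0 (n * c)).indicator 1 t := by
  filter_upwards [(countable_range fun m : ℕ => (m : ℝ) * c).ae_notMem volume] with t ht
  have hne (m : ℕ) : t ≠ m * c := fun h => ht ⟨m, h.symm⟩
  rw [indicator_Ioo_eq_indicator_Ioc _ (hne n), ← sum_range_indicator_Ioc_sub_mul hc]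
  refine Finset.sum_congr rfl fun k _ => indicator_Ioo_eq_indicator_Ioc _ fun h => hne (k + 1) ?_
  push_cast
  linarith

theorem integral_sin_const_mul {ω : ℝ} (hω : ω ≠ 0) (a b : ℝ) :
    ∫ t in a..b, sin (ω * t) = (cos (ω * a) - cos (ω * b)) / ω := by
  rw [intervalIntegral.integral_comp_mul_left sin hω, integral_sin, smul_eq_mul, inv_mul_eq_div]

theorem indicator_setOf_forall_mem_apply (s : ι → Set ℝ) (x : EuclideanSpace ℝ ι) :
    {y : EuclideanSpace ℝ ι | ∀ i, y i ∈ s i}.indicator (fun _ => (1 : ℝ)) x =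
      ∏ i, (s i).indicator 1 (x i) := by
  classical
  simp only [indicator_apply, mem_ofPred_eq, Pi.one_apply, Finset.prod_boole,
    Finset.mem_univ, true_implies]

def BrickTilesUnitCube (c : ι → ℝ) (Λ : Finset (EuclideanSpace ℝ ι)) : Prop :=
  ∀ᵐ x : EuclideanSpace ℝ ι,
    (∑ l ∈ Λ, {y : EuclideanSpace ℝ ι | ∀ i, y i ∈ Ioo 0 (c i)}.indicator
        (fun _ => (1 : ℝ)) (x - l)) =
      {y : EuclideanSpace ℝ ι | ∀ i, y i ∈ Ioo 0 1}.indicator (fun _ => (1 : ℝ)) x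

theorem indicator_brick_sub_mul_prod (c : ι → ℝ) (l x : EuclideanSpace ℝ ι) (g : ι → ℝ → ℝ) :
    {y : EuclideanSpace ℝ ι | ∀ i, y i ∈ Ioo 0 (c i)}.indicator (fun _ => (1 : ℝ)) (x - l) *
        ∏ i, g i (x i) =
      ∏ i, (Ioo (l i) (l i + c i)).indicator (g i) (x i) := by
  rw [indicator_setOf_forall_mem_apply, ← Finset.prod_mul_distrib]
  exact Finset.prod_congr rfl fun i _ => indicator_Ioo_sub_mul _ _ _ _

theorem BrickTilesUnitCube.sum_prod_setIntegral_eq {c : ι → ℝ}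
    {Λ : Finset (EuclideanSpace ℝ ι)} (h : BrickTilesUnitCube c Λ) {g : ι → ℝ → ℝ}
    (hg : ∀ i, Continuous (g i)) :
    ∑ l ∈ Λ, ∏ i, ∫ t in Ioo (l i) (l i + c i), g i t = ∏ i, ∫ t in Ioo 0 1, g i t := by
  have hint (a b : ℝ) (i : ι) : Integrable ((Ioo a b).indicator (g i)) :=
    (integrable_indicator_iff measurableSet_Ioo).2 <|
      (hg i).integrableOn_Icc.mono_set Ioo_subset_Icc_self
  have hbrick (x l : EuclideanSpace ℝ ι) := indicator_brick_sub_mul_prod c l x g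
  have hcube (x : EuclideanSpace ℝ ι) :
      {y : EuclideanSpace ℝ ι | ∀ i, y i ∈ Ioo 0 1}.indicator (fun _ => (1 : ℝ)) x *
        ∏ i, g i (x i) = ∏ i, (Ioo 0 1).indicator (g i) (x i) := by
    simpa using indicator_brick_sub_mul_prod 1 0 x g
  calc ∑ l ∈ Λ, ∏ i, ∫ t in Ioo (l i) (l i + c i), g i t
      = ∫ x, (∑ l ∈ Λ, {y : EuclideanSpace ℝ ι | ∀ i, y i ∈ Ioo 0 (c i)}.indicator
          (fun _ => (1 : ℝ)) (x - l)) * ∏ i, g i (x i) := by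
        simp_rw [Finset.sum_mul, hbrick]
        rw [integral_finsetSum _ fun l _ =>
          EuclideanSpace.integrable_fintype_prod fun i => hint _ _ i]
        simp_rw [EuclideanSpace.integral_fintype_prod_eq_prod,
          integral_indicator measurableSet_Ioo]
    _ = ∫ x, {y : EuclideanSpace ℝ ι | ∀ i, y i ∈ Ioo 0 1}.indicator (fun _ => (1 : ℝ)) x *
          ∏ i, g i (x i) :=
        integral_congr_ae (h.mono fun x hx => congrArg (· * ∏ i, g i (x i)) hx)
    _ = ∏ i, ∫ t in Ioo 0 1, g i t := by
        simp_rw [hcube, EuclideanSpace.integral_fintype_prod_eq_prod,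
          integral_indicator measurableSet_Ioo]

theorem BrickTilesUnitCube.exists_nat_inv_eq {c : ι → ℝ}
    {Λ : Finset (EuclideanSpace ℝ ι)} (h : BrickTilesUnitCube c Λ) {j : ι} (hcj : 0 < c j) :
    ∃ n : ℕ, 0 < n ∧ (c j)⁻¹ = n := by
  classical
  set ω := 2 * π / c j
  have hω : ω ≠ 0 := by positivity
  have hsin (a b : ℝ) (hab : a ≤ b) :
      ∫ t in Ioo a b, sin (ω * t) = (cos (ω * a) - cos (ω * b)) / ω := by
    rw [← integral_Ioc_eq_integral_Ioo, ← intervalIntegral.integral_of_le hab,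
      integral_sin_const_mul hω]
  let g : ι → ℝ → ℝ := Pi.mulSingle j fun t => sin (ω * t)
  have hgj : g j = fun t => sin (ω * t) := Pi.mulSingle_eq_same j _
  have hg_ne {i : ι} (hi : i ≠ j) : g i = 1 := Pi.mulSingle_eq_of_ne hi _
  have hg (i : ι) : Continuous (g i) := by
    rcases eq_or_ne i j with rfl | hi
    · rw [hgj]; fun_prop
    · rw [hg_ne hi]; exact continuous_one
  have hbrick : ∀ l ∈ Λ, ∏ i, ∫ t in Ioo (l i) (l i + c i), g i t = 0 := fun l _ => by
    refine Finset.prod_eq_zero (Finset.mem_univ j) ?_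
    have hperiod : ω * (l j + c j) = ω * l j + 2 * π := by
      simp only [ω]; field_simp
    rw [hgj, hsin _ _ (by linarith), hperiod, cos_add_two_pi, sub_self, zero_div]
  have hcube : ∏ i, ∫ t in Ioo 0 1, g i t = (1 - cos ω) / ω := by
    rw [Fintype.prod_eq_single j fun i hi => by simp [hg_ne hi], hgj, hsin 0 1 zero_le_one]
    simp
  have hcos : cos ω = 1 := by
    have key := h.sum_prod_setIntegral_eq hg
    rw [Finset.sum_eq_zero hbrick, hcube, eq_comm, div_eq_zero_iff, sub_eq_zero] at key
    exact (key.resolve_right hω).symm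
  obtain ⟨n, hn⟩ := (cos_eq_one_iff ω).1 hcos
  have hinv : (c j)⁻¹ = n := by
    simp only [ω] at hn
    field_simp at hn ⊢
    linarith
  have hn_pos : 0 < n := by exact_mod_cast hinv ▸ inv_pos.2 hcj
  exact ⟨n.toNat, by omega, by rw [hinv]; exact_mod_cast (Int.toNat_of_nonneg hn_pos.le).symm⟩

theorem brickTilesUnitCube_of_nat_mul_eq_one [DecidableEq ι] {c : ι → ℝ} {n : ι → ℕ}
    (hn : ∀ i, n i * c i = 1) :
    BrickTilesUnitCube c
      (Finset.univ.image fun k : (∀ i, Fin (n i)) =>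
        WithLp.toLp 2 fun i => (k i : ℝ) * c i) := by
  have hc (i : ι) : 0 < c i :=
    pos_of_mul_pos_right ((hn i).symm ▸ one_pos) (Nat.cast_nonneg _)
  have hinj : Function.Injective
      fun k : (∀ i, Fin (n i)) => WithLp.toLp 2 fun i => (k i : ℝ) * c i := fun k k' h =>
    funext fun i => Fin.ext <| by
      exact_mod_cast mul_right_cancel₀ (hc i).ne' (congrFun (congrArg WithLp.ofLp h) i)
  filter_upwards [EuclideanSpace.ae_forall_apply fun i =>
    ae_sum_range_indicator_Ioo_sub_mul (hc i).le (n i)] with x hx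
  rw [Finset.sum_image hinj.injOn]
  simp only [indicator_setOf_forall_mem_apply, PiLp.sub_apply]
  rw [← Fintype.prod_sum fun i (k : Fin (n i)) => (Ioo 0 (c i)).indicator 1 (x i - k * c i)]
  refine Finset.prod_congr rfl fun i _ => ?_
  rw [Fin.sum_univ_eq_sum_range (fun k => (Ioo 0 (c i)).indicator 1 (x i - k * c i)), hx i,
    hn i]

theorem brick_tiles_unit_cube_iff_general (d : ℕ)
    (c : Fin d → ℝ) (hc : ∀ j, 0 < c j) :
    (∃ Λ : Finset (EuclideanSpace ℝ (Fin d)),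
      ∀ᵐ x : EuclideanSpace ℝ (Fin d),
        (∑ l ∈ Λ, ({y : EuclideanSpace ℝ (Fin d) | ∀ j, y j ∈ Set.Ioo 0 (c j)}).indicator
            (fun _ => (1 : ℝ)) (x - l)) =
        ({y : EuclideanSpace ℝ (Fin d) | ∀ j, y j ∈ Set.Ioo 0 1}).indicator
          (fun _ => (1 : ℝ)) x)
    ↔ ∀ j, ∃ n : ℕ, 0 < n ∧ (c j)⁻¹ = n := by
  constructor
  · rintro ⟨Λ, hΛ⟩ j
    exact BrickTilesUnitCube.exists_nat_inv_eq hΛ (hc j)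
  · intro h
    choose n _ hn using h
    exact ⟨_, brickTilesUnitCube_of_nat_mul_eq_one fun j => by
      rw [← hn j, inv_mul_cancel₀ (hc j).ne']⟩

/-- A brick with side lengths `c j` tiles the unit cube `(0,1)^d` by translations
if and only if every `1 / c j` is a positive integer. -/
theorem brick_tiles_unit_cube_iff (d : ℕ) (hd : 1 ≤ d)
    (c : Fin d → ℝ) (hc : ∀ j, 0 < c j) :
    (∃ Λ : Finset (EuclideanSpace ℝ (Fin d)),
      ∀ᵐ x : EuclideanSpace ℝ (Fin d),
        (∑ l ∈ Λ, ({y : EuclideanSpace ℝ (Fin d) | ∀ j, y j ∈ Set.Ioo 0 (c j)}).indicator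
            (fun _ => (1 : ℝ)) (x - l)) =
        ({y : EuclideanSpace ℝ (Fin d) | ∀ j, y j ∈ Set.Ioo 0 1}).indicator
          (fun _ => (1 : ℝ)) x)
    ↔ ∀ j, ∃ n : ℕ, 0 < n ∧ (c j)⁻¹ = n :=
  brick_tiles_unit_cube_iff_general d c hc
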